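/- arXiv:2105.03613 — 7 statements merged into one kernel-verified Lean document; each statement's English description precedes it below -/
import Mathlib

section
/- Let γ ∈ (0, 1/2), α ∈ (−1/2 + γ, 0), and set H = α − γ + 1/2. For all v > 0 and s ≥ 0, the quantity ∫_0^v ((s+x)^α − x^α)^2 x^{−2γ} dx + ∫_0^{min(v,s)} (s−x)^{2α} x^{−2γ} dx is at most (1/(2α−2γ+1) + B(2α+1, 1−2γ)) · v^{2H}, where B denotes the Beta function. -/
/-!
Since `α ≤ 0`, on `(0, v)` we have `0 ≤ (s + x) ^ α ≤ x ^ α`, so the first integrand is at most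
`x ^ (2α - 2γ)`, whose integral is `v ^ (2H) / (2α - 2γ + 1)`. In the second integral put
`m = min v s`; as `s - x ≥ m - x` and `2α ≤ 0`, the substitution `x = m (1 - t)` bounds it by
`m ^ (2H) B(2α + 1, 1 - 2γ) ≤ v ^ (2H) B(2α + 1, 1 - 2γ)`.
-/

open MeasureTheory intervalIntegral Set

noncomputable def realBeta (a b : ℝ) : ℝ := ∫ t in (0:ℝ)..1, t ^ (a - 1) * (1 - t) ^ (b - 1)

lemma realBeta_nonneg (a b : ℝ) : 0 ≤ realBeta a b :=
  integral_nonneg zero_le_one fun _ ht =>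
    mul_nonneg (Real.rpow_nonneg ht.1 _) (Real.rpow_nonneg (sub_nonneg.2 ht.2) _)

lemma intervalIntegrable_rpow_mul_one_sub_rpow {p q : ℝ} (hp : -1 < p) (hq : -1 < q) :
    IntervalIntegrable (fun t : ℝ => t ^ p * (1 - t) ^ q) volume 0 1 := by
  have hC := (Complex.betaIntegral_convergent (u := (p + 1 : ℝ)) (v := (q + 1 : ℝ))
    (by simpa using by linarith) (by simpa using by linarith)).norm
  refine hC.congr fun t ht => ?_
  rw [uIoc_of_le zero_le_one] at ht
  have h1t : (0:ℝ) ≤ 1 - t := sub_nonneg.2 ht.2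
  simp only [Complex.ofReal_add, Complex.ofReal_one, add_sub_cancel_right]
  rw [← Complex.ofReal_cpow ht.1.le, ← Complex.ofReal_one, ← Complex.ofReal_sub,
    ← Complex.ofReal_cpow h1t, ← Complex.ofReal_mul, Complex.norm_real, Real.norm_of_nonneg
      (mul_nonneg (Real.rpow_nonneg ht.1.le _) (Real.rpow_nonneg h1t _))]

lemma integral_mono_of_nonneg_of_le_Ioo {f g : ℝ → ℝ} {a b : ℝ} (hab : a ≤ b)
    (hg : IntervalIntegrable g volume a b) (hf : ∀ x ∈ Ioo a b, 0 ≤ f x)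
    (hfg : ∀ x ∈ Ioo a b, f x ≤ g x) : ∫ x in a..b, f x ≤ ∫ x in a..b, g x := by
  rw [integral_of_le hab, integral_of_le hab, integral_Ioc_eq_integral_Ioo,
    integral_Ioc_eq_integral_Ioo]
  exact integral_mono_of_nonneg (ae_restrict_of_forall_mem measurableSet_Ioo hf)
    (hg.1.mono_set Ioo_subset_Ioc_self) (ae_restrict_of_forall_mem measurableSet_Ioo hfg)

lemma sq_rpow_sub_rpow_le {x y α : ℝ} (hx : 0 < x) (hxy : x ≤ y) (hα : α ≤ 0) :
    (y ^ α - x ^ α) ^ 2 ≤ x ^ (2 * α) := by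
  have hyx : y ^ α ≤ x ^ α := Real.rpow_le_rpow_of_nonpos hx hxy hα
  have hy : 0 ≤ y ^ α := Real.rpow_nonneg (hx.le.trans hxy) _
  rw [mul_comm, Real.rpow_mul hx.le, Real.rpow_two]
  nlinarith

lemma integral_sq_rpow_sub_rpow_mul_rpow_le {α q s v : ℝ} (hα : α ≤ 0) (hαq : -1 < 2 * α + q)
    (hs : 0 ≤ s) (hv : 0 ≤ v) :
    ∫ x in (0:ℝ)..v, ((s + x) ^ α - x ^ α) ^ 2 * x ^ q ≤ v ^ (2 * α + q + 1) / (2 * α + q + 1) := by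
  calc ∫ x in (0:ℝ)..v, ((s + x) ^ α - x ^ α) ^ 2 * x ^ q
      ≤ ∫ x in (0:ℝ)..v, x ^ (2 * α + q) := by
        refine integral_mono_of_nonneg_of_le_Ioo hv (intervalIntegrable_rpow' hαq)
          (fun x hx => mul_nonneg (sq_nonneg _) (Real.rpow_nonneg hx.1.le _)) fun x hx => ?_
        rw [Real.rpow_add hx.1]
        exact mul_le_mul_of_nonneg_right (sq_rpow_sub_rpow_le hx.1 (by linarith) hα)
          (Real.rpow_nonneg hx.1.le _)
    _ = v ^ (2 * α + q + 1) / (2 * α + q + 1) := by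
        rw [integral_rpow (Or.inl hαq), Real.zero_rpow (by linarith), sub_zero]

lemma integral_sub_rpow_mul_rpow_le {p q m s : ℝ} (hp : -1 < p) (hp0 : p ≤ 0) (hq : -1 < q)
    (hm0 : 0 ≤ m) (hms : m ≤ s) :
    ∫ x in (0:ℝ)..m, (s - x) ^ p * x ^ q ≤ realBeta (p + 1) (q + 1) * m ^ (p + q + 1) := by
  obtain rfl | hm := hm0.eq_or_lt
  · rw [integral_same]
    exact mul_nonneg (realBeta_nonneg _ _) (Real.rpow_nonneg le_rfl _)
  have hsubst := integral_comp_sub_mul (a := 0) (b := 1)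
    (fun x : ℝ => (s - x) ^ p * x ^ q) hm.ne' m
  simp only [mul_zero, mul_one, sub_zero, sub_self, smul_eq_mul] at hsubst
  have hscale : ∀ t ∈ Ioo (0:ℝ) 1, (s - (m - m * t)) ^ p * (m - m * t) ^ q
      ≤ m ^ (p + q) * (t ^ p * (1 - t) ^ q) := fun t ht => by
    have hmt : 0 < m * t := mul_pos hm ht.1
    rw [show m - m * t = m * (1 - t) by ring, Real.mul_rpow hm.le (by linarith [ht.2]),
      Real.rpow_add hm]
    calc (s - m * (1 - t)) ^ p * (m ^ q * (1 - t) ^ q)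
        ≤ (m * t) ^ p * (m ^ q * (1 - t) ^ q) :=
          mul_le_mul_of_nonneg_right (Real.rpow_le_rpow_of_nonpos hmt (by linarith) hp0)
            (mul_nonneg (Real.rpow_nonneg hm.le _) (Real.rpow_nonneg (sub_nonneg.2 ht.2.le) _))
      _ = m ^ p * m ^ q * (t ^ p * (1 - t) ^ q) := by
          rw [Real.mul_rpow hm.le ht.1.le]; ring
  calc ∫ x in (0:ℝ)..m, (s - x) ^ p * x ^ q
      = m * ∫ t in (0:ℝ)..1, (s - (m - m * t)) ^ p * (m - m * t) ^ q := by
        rw [hsubst, mul_inv_cancel_left₀ hm.ne']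
    _ ≤ m * ∫ t in (0:ℝ)..1, m ^ (p + q) * (t ^ p * (1 - t) ^ q) := by
        refine mul_le_mul_of_nonneg_left (integral_mono_of_nonneg_of_le_Ioo zero_le_one
          ((intervalIntegrable_rpow_mul_one_sub_rpow hp hq).const_mul _) (fun t ht => ?_)
          hscale) hm.le
        have hmt_le : m * t ≤ m := mul_le_of_le_one_right hm.le ht.2.le
        exact mul_nonneg (Real.rpow_nonneg (by nlinarith [ht.1]) _)
          (Real.rpow_nonneg (by linarith) _)
    _ = realBeta (p + 1) (q + 1) * m ^ (p + q + 1) := by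
        rw [intervalIntegral.integral_const_mul, Real.rpow_add_one hm.ne', realBeta]
        simp only [add_sub_cancel_right]
        ring

theorem stmt3_general (γ α : ℝ) (hγ : 0 < γ)
    (hα1 : -1/2 + γ < α) (hα2 : α < 0)
    (H : ℝ) (hH : H = α - γ + 1/2)
    (v s : ℝ) (hv : 0 < v) (hs : 0 ≤ s) :
    (∫ x in (0:ℝ)..v, ((s + x) ^ α - x ^ α) ^ 2 * x ^ (-2 * γ)) +
      (∫ x in (0:ℝ)..(min v s), (s - x) ^ (2 * α) * x ^ (-2 * γ)) ≤
      (1 / (2 * α - 2 * γ + 1) + realBeta (2 * α + 1) (1 - 2 * γ)) * v ^ (2 * H) := by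
  have hexp : 2 * H = 2 * α + -2 * γ + 1 := by rw [hH]; ring
  have hfirst := integral_sq_rpow_sub_rpow_mul_rpow_le (q := -2 * γ) hα2.le (by linarith) hs hv.le
  have hsecond := integral_sub_rpow_mul_rpow_le (p := 2 * α) (q := -2 * γ) (by linarith)
    (by linarith) (by linarith) (le_min hv.le hs) (min_le_right v s)
  have hmin : min v s ^ (2 * α + -2 * γ + 1) ≤ v ^ (2 * α + -2 * γ + 1) :=
    Real.rpow_le_rpow (le_min hv.le hs) (min_le_left v s) (by linarith)
  rw [hexp, show 1 - 2 * γ = -2 * γ + 1 by ring,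
    show 2 * α - 2 * γ + 1 = 2 * α + -2 * γ + 1 by ring]
  calc _ ≤ v ^ (2 * α + -2 * γ + 1) / (2 * α + -2 * γ + 1)
        + realBeta (2 * α + 1) (-2 * γ + 1) * v ^ (2 * α + -2 * γ + 1) :=
        add_le_add hfirst (hsecond.trans (mul_le_mul_of_nonneg_left hmin (realBeta_nonneg _ _)))
    _ = _ := by ring

theorem stmt3 (γ α : ℝ) (hγ : 0 < γ) (hγ' : γ < 1/2)
    (hα1 : -1/2 + γ < α) (hα2 : α < 0)
    (H : ℝ) (hH : H = α - γ + 1/2)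
    (v s : ℝ) (hv : 0 < v) (hs : 0 ≤ s) :
    (∫ x in (0:ℝ)..v, ((s + x) ^ α - x ^ α) ^ 2 * x ^ (-2 * γ)) +
      (∫ x in (0:ℝ)..(min v s), (s - x) ^ (2 * α) * x ^ (-2 * γ)) ≤
      (1 / (2 * α - 2 * γ + 1) + realBeta (2 * α + 1) (1 - 2 * γ)) * v ^ (2 * H) :=
  stmt3_general γ α hγ hα1 hα2 H hH v s hv hs
end

section
/- Let H ∈ (0, 1), β > 0, and let φ : (0, ∞) → (0, 1] be non-decreasing such that θ ↦ θ^{−1/β} φ(θ) is increasing on (0, θ₀) for some θ₀ > 0 and inf{φ(θ)/θ^{1/β} : θ₀ ≤ θ ≤ C} > 0 for every C > 0. Let ξ : (0, e^{−e}] → (0, ∞) be nondecreasing continuous with ξ(t)/t^H bounded, and suppose ∫_0^{e^{−e}} (ξ(t)/t^H)^{−1/β} φ(ξ(t)/t^H) dt/t < ∞. Then lim_{t→0+} ξ(t)/t^H = 0. -/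
/-!
Write `g t = ξ t / t ^ H` and `ψ θ = θ ^ (-1 / β) * φ θ`. Monotonicity of `ξ` gives
`g u ≥ g t / 2 ^ H` for `t ≤ u ≤ 2 t`, and `ψ` has a positive lower bound `c` on every
`[a, C]` with `a > 0` (monotonicity below `θ₀`, the infimum hypothesis above it). Hence
`g t ≥ ε` forces `∫_{(t, 2t]} ψ (g u) / u du ≥ c log 2`, while by absolute continuity of the
integral these integrals tend to `0` as `t → 0+`.
-/

open MeasureTheory Real Filter Set Topology

theorem tendsto_setIntegral_Ioc_two_mul {f : ℝ → ℝ} {T : ℝ} (hT : 0 < T)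
    (hf : IntegrableOn f (Ioc 0 T)) :
    Tendsto (fun t => ∫ u in Ioc t (2 * t), f u) (𝓝[>] 0) (𝓝 0) := by
  have hvol : Tendsto (fun t : ℝ => volume (Ioc t (2 * t))) (𝓝[>] 0) (𝓝 0) := by
    simp only [Real.volume_Ioc, show ∀ t : ℝ, 2 * t - t = t by intro t; ring]
    simpa using ENNReal.tendsto_ofReal
      ((tendsto_id (x := 𝓝[>] (0 : ℝ))).mono_right nhdsWithin_le_nhds)
  have hsmall := hf.tendsto_setIntegral_nhds_zero (l := 𝓝[>] 0) (s := fun t => Ioc t (2 * t))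
    (tendsto_of_tendsto_of_tendsto_of_le_of_le tendsto_const_nhds hvol (fun _ => bot_le)
      (fun _ => Measure.restrict_apply_le _ _))
  refine hsmall.congr' ?_
  filter_upwards [Ioo_mem_nhdsGT (half_pos hT)] with t ht
  rw [Measure.restrict_restrict measurableSet_Ioc,
    inter_eq_left.2 (Ioc_subset_Ioc ht.1.le (by linarith [ht.2]))]

theorem mul_log_two_le_setIntegral_Ioc_two_mul {f : ℝ → ℝ} {c t : ℝ} (ht : 0 < t)
    (hf : IntegrableOn f (Ioc t (2 * t))) (hcf : ∀ u ∈ Ioc t (2 * t), c / u ≤ f u) :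
    c * log 2 ≤ ∫ u in Ioc t (2 * t), f u := by
  have hinv : ∫ u in Ioc t (2 * t), c / u = c * log 2 := by
    rw [← intervalIntegral.integral_of_le (by linarith)]
    simp only [div_eq_mul_inv, intervalIntegral.integral_const_mul,
      integral_inv_of_pos ht (by linarith : 0 < 2 * t)]
    rw [mul_inv_cancel_right₀ ht.ne']
  rw [← hinv]
  refine setIntegral_mono_on ?_ hf measurableSet_Ioc hcf
  exact (continuousOn_const.div continuousOn_id fun u hu =>
    (ht.trans_le hu.1).ne').integrableOn_Icc.mono_set Ioc_subset_Icc_self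

theorem div_rpow_div_two_rpow_le {ξ : ℝ → ℝ} {s : Set ℝ} (hξ : MonotoneOn ξ s)
    {H t u : ℝ} (hH : 0 ≤ H) (ht : t ∈ s) (hu : u ∈ s) (htpos : 0 < t) (hξu : 0 ≤ ξ u)
    (htu : t ≤ u) (hu2t : u ≤ 2 * t) :
    ξ t / t ^ H / 2 ^ H ≤ ξ u / u ^ H := by
  rw [div_div, ← mul_rpow htpos.le zero_le_two, mul_comm]
  exact div_le_div₀ hξu (hξ ht hu htu) (rpow_pos_of_pos (htpos.trans_le htu) H)
    (rpow_le_rpow (htpos.trans_le htu).le hu2t hH)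

theorem exists_pos_forall_mem_Icc_le {ψ : ℝ → ℝ} {θ₀ : ℝ} (hθ₀ : 0 < θ₀)
    (hpos : ∀ θ, 0 < θ → 0 < ψ θ) (hmono : MonotoneOn ψ (Ioo 0 θ₀))
    (hinf : ∀ C, 0 < C → ∃ m, 0 < m ∧ ∀ θ ∈ Icc θ₀ C, m ≤ ψ θ)
    {a : ℝ} (ha : 0 < a) (C : ℝ) : ∃ c, 0 < c ∧ ∀ θ ∈ Icc a C, c ≤ ψ θ := by
  obtain ⟨m, hm, hmψ⟩ := hinf (max C θ₀) (lt_max_of_lt_right hθ₀)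
  set a' := min a (θ₀ / 2)
  have ha' : a' ∈ Ioo 0 θ₀ :=
    ⟨lt_min ha (half_pos hθ₀), (min_le_right _ _).trans_lt (half_lt_self hθ₀)⟩
  refine ⟨min (ψ a') m, lt_min (hpos _ ha'.1) hm, fun θ hθ => ?_⟩
  rcases lt_or_ge θ θ₀ with hlt | hge
  · exact (min_le_left _ _).trans <|
      hmono ha' ⟨ha.trans_le hθ.1, hlt⟩ ((min_le_left _ _).trans hθ.1)
  · exact (min_le_right _ _).trans <| hmψ θ ⟨hge, hθ.2.trans (le_max_left _ _)⟩

theorem stmt12_general (H β θ₀ : ℝ) (hH : H ∈ Set.Ioo (0:ℝ) 1) (hθ₀ : 0 < θ₀)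
    (φ : ℝ → ℝ)
    (hφrange : ∀ θ : ℝ, 0 < θ → φ θ ∈ Set.Ioc (0:ℝ) 1)
    (hφinc : StrictMonoOn (fun θ : ℝ => θ ^ (-1 / β) * φ θ) (Set.Ioo 0 θ₀))
    (hinf : ∀ C : ℝ, 0 < C → ∃ m : ℝ, 0 < m ∧ ∀ θ ∈ Set.Icc θ₀ C, m ≤ φ θ / θ ^ (1 / β))
    (ξ : ℝ → ℝ)
    (hξpos : ∀ t ∈ Set.Ioc (0:ℝ) (exp (-exp 1)), 0 < ξ t)
    (hξmono : MonotoneOn ξ (Set.Ioc (0:ℝ) (exp (-exp 1))))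
    (hbdd : ∃ C : ℝ, ∀ t ∈ Set.Ioc (0:ℝ) (exp (-exp 1)), ξ t / t ^ H ≤ C)
    (hint : IntegrableOn
      (fun t : ℝ => (ξ t / t ^ H) ^ (-1 / β) * φ (ξ t / t ^ H) / t)
      (Set.Ioc 0 (exp (-exp 1)))) :
    Tendsto (fun t : ℝ => ξ t / t ^ H) (nhdsWithin 0 (Set.Ioi 0)) (nhds 0) := by
  obtain ⟨C, hC⟩ := hbdd
  have hT : 0 < exp (-exp 1) := exp_pos _
  have hg_pos : ∀ t ∈ Ioc 0 (exp (-exp 1)), 0 < ξ t / t ^ H :=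
    fun t ht => div_pos (hξpos t ht) (rpow_pos_of_pos ht.1 H)
  have hψ : ∀ θ, 0 < θ → φ θ / θ ^ (1 / β) = θ ^ (-1 / β) * φ θ := fun θ hθ => by
    rw [neg_div, rpow_neg hθ.le, div_eq_inv_mul]
  refine tendsto_order.2 ⟨fun a ha => ?_, fun ε hε => ?_⟩
  · filter_upwards [Ioc_mem_nhdsGT hT] with t ht using ha.trans (hg_pos t ht)
  obtain ⟨c, hc, hcψ⟩ := exists_pos_forall_mem_Icc_le hθ₀
    (fun θ hθ => mul_pos (rpow_pos_of_pos hθ _) (hφrange θ hθ).1) hφinc.monotoneOn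
    (fun C hC => (hinf C hC).imp fun _ ⟨hm, hmθ⟩ =>
      ⟨hm, fun θ hθ => hψ θ (hθ₀.trans_le hθ.1) ▸ hmθ θ hθ⟩)
    (div_pos hε (rpow_pos_of_pos two_pos H)) C
  filter_upwards [Ioc_mem_nhdsGT (half_pos hT),
    (tendsto_setIntegral_Ioc_two_mul hT hint).eventually
      (gt_mem_nhds (mul_pos hc (log_pos one_lt_two)))] with t ht hsmall
  by_contra! hεt
  have hsub : Ioc t (2 * t) ⊆ Ioc 0 (exp (-exp 1)) :=
    Ioc_subset_Ioc ht.1.le (by linarith [ht.2])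
  refine hsmall.not_ge
    (mul_log_two_le_setIntegral_Ioc_two_mul ht.1 (hint.mono_set hsub) fun u hu => ?_)
  have hgu : ξ u / u ^ H ∈ Icc (ε / 2 ^ H) C :=
    ⟨(div_le_div_of_nonneg_right hεt (rpow_pos_of_pos two_pos H).le).trans
      (div_rpow_div_two_rpow_le hξmono hH.1.le ⟨ht.1, by linarith [ht.2]⟩ (hsub hu) ht.1
        (hξpos u (hsub hu)).le hu.1.le hu.2), hC u (hsub hu)⟩
  exact div_le_div_of_nonneg_right (hcψ _ hgu) (ht.1.trans hu.1).le

theorem stmt12 (H β θ₀ : ℝ) (hH : H ∈ Set.Ioo (0:ℝ) 1) (hβ : 0 < β) (hθ₀ : 0 < θ₀)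
    (φ : ℝ → ℝ)
    (hφrange : ∀ θ : ℝ, 0 < θ → φ θ ∈ Set.Ioc (0:ℝ) 1)
    (hφmono : MonotoneOn φ (Set.Ioi (0:ℝ)))
    (hφinc : StrictMonoOn (fun θ : ℝ => θ ^ (-1 / β) * φ θ) (Set.Ioo 0 θ₀))
    (hinf : ∀ C : ℝ, 0 < C → ∃ m : ℝ, 0 < m ∧ ∀ θ ∈ Set.Icc θ₀ C, m ≤ φ θ / θ ^ (1 / β))
    (ξ : ℝ → ℝ)
    (hξpos : ∀ t ∈ Set.Ioc (0:ℝ) (exp (-exp 1)), 0 < ξ t)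
    (hξmono : MonotoneOn ξ (Set.Ioc (0:ℝ) (exp (-exp 1))))
    (hξcont : ContinuousOn ξ (Set.Ioc (0:ℝ) (exp (-exp 1))))
    (hbdd : ∃ C : ℝ, ∀ t ∈ Set.Ioc (0:ℝ) (exp (-exp 1)), ξ t / t ^ H ≤ C)
    (hint : IntegrableOn
      (fun t : ℝ => (ξ t / t ^ H) ^ (-1 / β) * φ (ξ t / t ^ H) / t)
      (Set.Ioc 0 (exp (-exp 1)))) :
    Tendsto (fun t : ℝ => ξ t / t ^ H) (nhdsWithin 0 (Set.Ioi 0)) (nhds 0) :=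
  stmt12_general H β θ₀ hH hθ₀ φ hφrange hφinc hinf ξ hξpos hξmono hbdd hint
end

section
/- Let H ∈ (0, 1), β > 0, and φ : (0, ∞) → (0, 1] non-decreasing with θ ↦ θ^{−1/β} φ(θ) increasing on (0, θ₀), θ₀ > 0, and inf{φ(θ)/θ^{1/β} : θ₀ ≤ θ ≤ C} > 0 for every C > 0. Let ξ : [e^e, ∞) → (0, ∞) be nondecreasing continuous with ξ(t)/t^H bounded, and suppose ∫_{e^e}^∞ (ξ(t)/t^H)^{−1/β} φ(ξ(t)/t^H) dt/t < ∞. Then lim_{t→∞} ξ(t)/t^H = 0. -/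
open MeasureTheory Real Filter Set

/-! Put `g t = ξ t / t ^ H`. Since `ξ` is nondecreasing, `g s ≥ g t / 2 ^ H` for `s ∈ [t, 2t]`;
with `g ≤ C` and `φ` nondecreasing the integrand is at least `C ^ (-1/β) φ (g t / 2 ^ H) / (2t)`
there, so `∫_t^{2t} ≥ C ^ (-1/β) φ (g t / 2 ^ H) / 2`. Integrability forces `∫_t^{2t} → 0`,
hence `φ (g t / 2 ^ H) → 0`, which is impossible if `g t ≥ ε` for arbitrarily large `t`. -/

theorem MeasureTheory.IntegrableOn.intervalIntegrable_of_Ioi {E : Type*} [NormedAddCommGroup E]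
    {f : ℝ → E} {a b c : ℝ} (hf : IntegrableOn f (Ioi a)) (hab : a ≤ b) (hbc : b ≤ c) :
    IntervalIntegrable f volume b c :=
  (intervalIntegrable_iff_integrableOn_Ioc_of_le hbc).2
    (hf.mono_set fun _ hx => hab.trans_lt hx.1)

theorem intervalIntegral_tendsto_zero_of_integrableOn_Ioi {E : Type*} [NormedAddCommGroup E]
    [NormedSpace ℝ E] [CompleteSpace E] {f : ℝ → E} {a : ℝ} (hf : IntegrableOn f (Ioi a))
    {ι : Type*} {l : Filter ι} [l.IsCountablyGenerated] {u v : ι → ℝ} (hu : Tendsto u l atTop)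
    (hv : Tendsto v l atTop) :
    Tendsto (fun i => ∫ x in u i..v i, f x) l (nhds 0) := by
  have hlim := (intervalIntegral_tendsto_integral_Ioi a hf hv).sub
    (intervalIntegral_tendsto_integral_Ioi a hf hu)
  rw [sub_self] at hlim
  refine hlim.congr' ?_
  filter_upwards [hu.eventually_ge_atTop a, hv.eventually_ge_atTop a] with i hui hvi
  exact intervalIntegral.integral_interval_sub_left (hf.intervalIntegrable_of_Ioi le_rfl hvi)
    (hf.intervalIntegrable_of_Ioi le_rfl hui)

theorem div_rpow_div_two_rpow_le_s13 {H t s x y : ℝ} (hH : 0 ≤ H) (ht : 0 < t) (hts : t ≤ s)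
    (hs : s ≤ 2 * t) (hx : 0 ≤ x) (hxy : x ≤ y) : x / t ^ H / 2 ^ H ≤ y / s ^ H :=
  calc x / t ^ H / 2 ^ H = x / (2 * t) ^ H := by
        rw [mul_rpow zero_le_two ht.le, div_div, mul_comm]
    _ ≤ y / s ^ H := div_le_div₀ (hx.trans hxy) hxy (rpow_pos_of_pos (ht.trans_le hts) H)
        (rpow_le_rpow (ht.trans_le hts).le hs hH)

theorem rpow_mul_le_rpow_mul_of_monotoneOn {φ : ℝ → ℝ} (hφ : MonotoneOn φ (Ioi 0))
    {p θ x C : ℝ} (hp : p ≤ 0) (hθ : 0 < θ) (hφθ : 0 ≤ φ θ) (hθx : θ ≤ x) (hxC : x ≤ C) :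
    C ^ p * φ θ ≤ x ^ p * φ x := by
  have hx : 0 < x := hθ.trans_le hθx
  exact mul_le_mul (rpow_le_rpow_of_nonpos hx hxC hp) (hφ hθ hx hθx) hφθ (by positivity)

theorem le_intervalIntegral_two_mul {H β θ C a t : ℝ} {φ ξ : ℝ → ℝ} (hH : 0 ≤ H) (hβ : 0 < β)
    (hφ : MonotoneOn φ (Ioi 0)) (hθ : 0 < θ) (hφθ : 0 ≤ φ θ) (hξ : MonotoneOn ξ (Ici a))
    (hC : ∀ s ∈ Ici a, ξ s / s ^ H ≤ C) (hat : a ≤ t) (ht : 0 < t)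
    (hθt : θ ≤ ξ t / t ^ H / 2 ^ H)
    (hint : IntervalIntegrable (fun s => (ξ s / s ^ H) ^ (-1 / β) * φ (ξ s / s ^ H) / s)
      volume t (2 * t)) :
    C ^ (-1 / β) * φ θ / 2 ≤ ∫ s in t..2 * t, (ξ s / s ^ H) ^ (-1 / β) * φ (ξ s / s ^ H) / s := by
  have hξt : 0 ≤ ξ t := by
    have : 0 < ξ t / t ^ H / 2 ^ H := hθ.trans_le hθt
    rw [div_div] at this
    exact (div_pos_iff_of_pos_right (by positivity)).1 this |>.le
  have hp : -1 / β ≤ 0 := div_nonpos_of_nonpos_of_nonneg (by norm_num) hβ.le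
  have hbound : ∀ s ∈ Icc t (2 * t),
      C ^ (-1 / β) * φ θ / (2 * t) ≤ (ξ s / s ^ H) ^ (-1 / β) * φ (ξ s / s ^ H) / s := by
    rintro s ⟨hts, hs⟩
    have has : a ≤ s := hat.trans hts
    have hθs : θ ≤ ξ s / s ^ H :=
      hθt.trans (div_rpow_div_two_rpow_le_s13 hH ht hts hs hξt (hξ hat has hts))
    have hnum := rpow_mul_le_rpow_mul_of_monotoneOn hφ hp hθ hφθ hθs (hC s has)
    have hC0 : 0 ≤ C := hθ.le.trans (hθs.trans (hC s has))
    have hc : 0 ≤ C ^ (-1 / β) * φ θ := by positivity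
    exact div_le_div₀ (hc.trans hnum) hnum (ht.trans_le hts) hs
  calc C ^ (-1 / β) * φ θ / 2 = ∫ _ in t..2 * t, C ^ (-1 / β) * φ θ / (2 * t) := by
        rw [intervalIntegral.integral_const, smul_eq_mul]
        field_simp
        ring
    _ ≤ _ := intervalIntegral.integral_mono_on (by linarith) intervalIntegrable_const hint hbound

theorem stmt13_general (H β : ℝ) (hH : H ∈ Set.Ioo (0:ℝ) 1) (hβ : 0 < β)
    (φ : ℝ → ℝ)
    (hφrange : ∀ θ : ℝ, 0 < θ → φ θ ∈ Set.Ioc (0:ℝ) 1)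
    (hφmono : MonotoneOn φ (Set.Ioi (0:ℝ)))
    (ξ : ℝ → ℝ)
    (hξpos : ∀ t ∈ Set.Ici (exp (exp 1)), 0 < ξ t)
    (hξmono : MonotoneOn ξ (Set.Ici (exp (exp 1))))
    (hbdd : ∃ C : ℝ, ∀ t ∈ Set.Ici (exp (exp 1)), ξ t / t ^ H ≤ C)
    (hint : IntegrableOn
      (fun t : ℝ => (ξ t / t ^ H) ^ (-1 / β) * φ (ξ t / t ^ H) / t)
      (Set.Ioi (exp (exp 1)))) :
    Tendsto (fun t : ℝ => ξ t / t ^ H) atTop (nhds 0) := by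
  set a := exp (exp 1)
  obtain ⟨C, hC⟩ := hbdd
  have hC0 : 0 < C :=
    (div_pos (hξpos a (mem_Ici.2 le_rfl)) (by positivity)).trans_le (hC a (mem_Ici.2 le_rfl))
  have hsmall := intervalIntegral_tendsto_zero_of_integrableOn_Ioi hint tendsto_id
    (tendsto_id.const_mul_atTop two_pos)
  rw [Metric.tendsto_nhds]
  intro ε hε
  set θ := ε / 2 ^ H
  have hθ : 0 < θ := by positivity
  have hc : 0 < C ^ (-1 / β) * φ θ / 2 := by
    have := (hφrange θ hθ).1
    positivity
  filter_upwards [hsmall.eventually_lt_const hc, eventually_gt_atTop a] with t hlt hat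
  have ht : 0 < t := (exp_pos _).trans hat
  rw [dist_zero_right, norm_of_nonneg (div_pos (hξpos t hat.le) (by positivity)).le]
  by_contra! hεt
  exact hlt.not_ge (le_intervalIntegral_two_mul hH.1.le hβ hφmono hθ (hφrange θ hθ).1.le hξmono
    hC hat.le ht (div_le_div_of_nonneg_right hεt (by positivity))
    (hint.intervalIntegrable_of_Ioi hat.le (by linarith : t ≤ 2 * t)))

theorem stmt13 (H β θ₀ : ℝ) (hH : H ∈ Set.Ioo (0:ℝ) 1) (hβ : 0 < β) (hθ₀ : 0 < θ₀)
    (φ : ℝ → ℝ)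
    (hφrange : ∀ θ : ℝ, 0 < θ → φ θ ∈ Set.Ioc (0:ℝ) 1)
    (hφmono : MonotoneOn φ (Set.Ioi (0:ℝ)))
    (hφinc : StrictMonoOn (fun θ : ℝ => θ ^ (-1 / β) * φ θ) (Set.Ioo 0 θ₀))
    (hinf : ∀ C : ℝ, 0 < C → ∃ m : ℝ, 0 < m ∧ ∀ θ ∈ Set.Icc θ₀ C, m ≤ φ θ / θ ^ (1 / β))
    (ξ : ℝ → ℝ)
    (hξpos : ∀ t ∈ Set.Ici (exp (exp 1)), 0 < ξ t)
    (hξmono : MonotoneOn ξ (Set.Ici (exp (exp 1))))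
    (hξcont : ContinuousOn ξ (Set.Ici (exp (exp 1))))
    (hbdd : ∃ C : ℝ, ∀ t ∈ Set.Ici (exp (exp 1)), ξ t / t ^ H ≤ C)
    (hint : IntegrableOn
      (fun t : ℝ => (ξ t / t ^ H) ^ (-1 / β) * φ (ξ t / t ^ H) / t)
      (Set.Ioi (exp (exp 1)))) :
    Tendsto (fun t : ℝ => ξ t / t ^ H) atTop (nhds 0) :=
  stmt13_general H β hH hβ φ hφrange hφmono ξ hξpos hξmono hbdd hint
end

section
/- Let β > 0 and K₂ ≥ 1, and let ψ : (0, 1) → (0, ∞) be convex with right derivative satisfying −K₂ θ^{−1−1/β} ≤ ψ′(θ) ≤ −(1/K₂) θ^{−1−1/β} on (0, 1/K₂); set φ = exp(−ψ). Then for every L > 0 and all θ ∈ (0, 1/(2K₂)) with ε := θ + L θ^{1+1/β} ≤ 2θ, one has φ(ε) ≥ φ(θ) · exp(L/(2^{1+1/β} K₂)). -/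
/-!
Convexity bounds the increment `ψ ε - ψ θ` by `(ε - θ) ψ'(ε)`. On `(θ, ε)` with `ε ≤ 2θ` the
derivative bound gives `ψ'(ε) ≤ -(2θ)^{-1-1/β} / K₂`, and the choice `ε - θ = L θ^{1+1/β}` makes the
powers of `θ` cancel, so `ψ` drops by at least `L / (2^{1+1/β} K₂)`.
-/

open Set Real

/-- For a convex function the right derivative dominates the left derivative, which in turn
bounds the slope of every secant ending at `y`. -/
theorem ConvexOn.slope_le_of_hasDerivWithinAt_Ici {S : Set ℝ} {f : ℝ → ℝ} {x y f' : ℝ}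
    (hfc : ConvexOn ℝ S f) (hx : x ∈ S) (hy : y ∈ interior S) (hxy : x < y)
    (hf' : HasDerivWithinAt f f' (Ici y) y) :
    slope f x y ≤ f' :=
  (hfc.slope_le_leftDeriv_of_mem_interior hx hy hxy).trans <|
    (hfc.leftDeriv_le_rightDeriv_of_mem_interior hy).trans_eq <|
      hf'.Ioi_of_Ici.derivWithin (uniqueDiffWithinAt_Ioi y)

theorem ConvexOn.le_sub_mul_of_hasDerivWithinAt_Ici {S : Set ℝ} {f : ℝ → ℝ} {x y f' c : ℝ}
    (hfc : ConvexOn ℝ S f) (hx : x ∈ S) (hy : y ∈ interior S) (hxy : x < y)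
    (hf' : HasDerivWithinAt f f' (Ici y) y) (hc : f' ≤ -c) :
    f y ≤ f x - (y - x) * c := by
  have hslope := hfc.slope_le_of_hasDerivWithinAt_Ici hx hy hxy hf'
  rw [slope_def_field, div_le_iff₀ (sub_pos.mpr hxy)] at hslope
  nlinarith

theorem Real.rpow_mul_mul_rpow_neg {θ c : ℝ} (hθ : 0 < θ) (hc : 0 ≤ c) (p : ℝ) :
    θ ^ p * (c * θ) ^ (-p) = (c ^ p)⁻¹ := by
  rw [mul_rpow hc hθ.le, rpow_neg hc, rpow_neg hθ.le]
  field_simp [(rpow_pos_of_pos hθ p).ne']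

theorem stmt14_general (β K₂ : ℝ) (hβ : 0 < β) (hK₂ : 1 ≤ K₂)
    (ψ ψ' : ℝ → ℝ)
    (hconv : ConvexOn ℝ (Set.Ioo (0:ℝ) 1) ψ)
    (hderiv : ∀ θ ∈ Set.Ioo (0:ℝ) 1, HasDerivWithinAt ψ (ψ' θ) (Set.Ici θ) θ)
    (hbound : ∀ θ ∈ Set.Ioo (0:ℝ) (1 / K₂),
      -K₂ * θ ^ (-1 - 1 / β) ≤ ψ' θ ∧ ψ' θ ≤ -(1 / K₂) * θ ^ (-1 - 1 / β))
    (φ : ℝ → ℝ) (hφ : ∀ θ, φ θ = Real.exp (-ψ θ)) :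
    ∀ L : ℝ, 0 < L → ∀ θ ∈ Set.Ioo (0:ℝ) (1 / (2 * K₂)),
      θ + L * θ ^ (1 + 1 / β) ≤ 2 * θ →
      φ (θ + L * θ ^ (1 + 1 / β)) ≥ φ θ * Real.exp (L / (2 ^ (1 + 1 / β) * K₂)) := by
  intro L hL θ ⟨hθ0, hθK⟩ hle
  set ε := θ + L * θ ^ (1 + 1 / β)
  have hK₂0 : 0 < K₂ := one_pos.trans_le hK₂
  have hθε : θ < ε := lt_add_of_pos_right θ (mul_pos hL (rpow_pos_of_pos hθ0 _))
  have hεK : ε < 1 / K₂ := hle.trans_lt <| by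
    rw [lt_div_iff₀ (by positivity)] at hθK
    rw [lt_div_iff₀ hK₂0]
    linarith
  have hε : ε ∈ Ioo (0:ℝ) 1 := ⟨hθ0.trans hθε, hεK.trans_le ((div_le_one hK₂0).mpr hK₂)⟩
  have hψ' : ψ' ε ≤ -(1 / K₂ * (2 * θ) ^ (-1 - 1 / β)) := by
    refine (hbound ε ⟨hε.1, hεK⟩).2.trans ?_
    rw [neg_mul, neg_le_neg_iff]
    refine mul_le_mul_of_nonneg_left ?_ (by positivity)
    exact rpow_le_rpow_of_nonpos hε.1 hle (by linarith [one_div_pos.mpr hβ])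
  have hdrop := hconv.le_sub_mul_of_hasDerivWithinAt_Ici ⟨hθ0, hθε.trans hε.2⟩
    (by rwa [interior_Ioo]) hθε (hderiv ε hε) hψ'
  have hcancel : (ε - θ) * (1 / K₂ * (2 * θ) ^ (-1 - 1 / β)) = L / (2 ^ (1 + 1 / β) * K₂) := by
    rw [show -1 - 1 / β = -(1 + 1 / β) by ring, add_sub_cancel_left,
      show L * θ ^ (1 + 1 / β) * (1 / K₂ * (2 * θ) ^ (-(1 + 1 / β)))
        = L / K₂ * (θ ^ (1 + 1 / β) * (2 * θ) ^ (-(1 + 1 / β))) by ring,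
      rpow_mul_mul_rpow_neg hθ0 zero_le_two]
    ring
  rw [hφ, hφ, ← exp_add]
  exact exp_le_exp.mpr (by linarith)

theorem stmt14 (β K₂ : ℝ) (hβ : 0 < β) (hK₂ : 1 ≤ K₂)
    (ψ ψ' : ℝ → ℝ)
    (hpos : ∀ θ ∈ Set.Ioo (0:ℝ) 1, 0 < ψ θ)
    (hconv : ConvexOn ℝ (Set.Ioo (0:ℝ) 1) ψ)
    (hderiv : ∀ θ ∈ Set.Ioo (0:ℝ) 1, HasDerivWithinAt ψ (ψ' θ) (Set.Ici θ) θ)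
    (hbound : ∀ θ ∈ Set.Ioo (0:ℝ) (1 / K₂),
      -K₂ * θ ^ (-1 - 1 / β) ≤ ψ' θ ∧ ψ' θ ≤ -(1 / K₂) * θ ^ (-1 - 1 / β))
    (φ : ℝ → ℝ) (hφ : ∀ θ, φ θ = Real.exp (-ψ θ)) :
    ∀ L : ℝ, 0 < L → ∀ θ ∈ Set.Ioo (0:ℝ) (1 / (2 * K₂)),
      θ + L * θ ^ (1 + 1 / β) ≤ 2 * θ →
      φ (θ + L * θ ^ (1 + 1 / β)) ≥ φ θ * Real.exp (L / (2 ^ (1 + 1 / β) * K₂)) :=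
  stmt14_general β K₂ hβ hK₂ ψ ψ' hconv hderiv hbound φ hφ
end

section
/- Let β > 0, K₂ ≥ 1, and let ψ : (0, 1) → (0, ∞) be convex with ψ′(θ) ≤ −(1/K₂) θ^{−1−1/β} for θ ∈ (0, 1/K₂); set φ = exp(−ψ). Then for every a ∈ (0, 1/K₂), ∫_0^1 φ(v a) dv ≤ K₂ · a^{1/β} · φ(a). -/
open intervalIntegral

/-!
By convexity, `ψ` lies above its tangent line at `a` computed with the right derivative, so for
`v ∈ (0, 1]` the derivative bound gives `ψ (v * a) ≥ ψ a + (1 - v) / c` with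
`c = K₂ * a ^ (1 / β)`, because `a * (1 / K₂) * a ^ (-1 - 1 / β) = 1 / c`. Hence
`φ (v * a) ≤ φ a * exp ((v - 1) / c)`, and `∫₀¹ exp ((v - 1) / c) dv = c * (1 - exp (-1 / c)) ≤ c`.
-/

open Set Real MeasureTheory

namespace ConvexOn

variable {S : Set ℝ} {f : ℝ → ℝ} {f' x y : ℝ}

lemma slope_le_of_hasDerivWithinAt_Ioi (hfc : ConvexOn ℝ S f) (hx : x ∈ S)
    (hy : y ∈ interior S) (hxy : x < y) (hf' : HasDerivWithinAt f f' (Ioi y) y) :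
    slope f x y ≤ f' :=
  calc slope f x y ≤ derivWithin f (Iio y) y := hfc.slope_le_leftDeriv_of_mem_interior hx hy hxy
    _ ≤ derivWithin f (Ioi y) y := hfc.leftDeriv_le_rightDeriv_of_mem_interior hy
    _ = f' := hf'.derivWithin (uniqueDiffWithinAt_Ioi y)

lemma add_mul_sub_le_of_hasDerivWithinAt_Ioi (hfc : ConvexOn ℝ S f) (hx : x ∈ S)
    (hy : y ∈ interior S) (hxy : x ≤ y) (hf' : HasDerivWithinAt f f' (Ioi y) y) :
    f y + f' * (x - y) ≤ f x := by
  rcases hxy.eq_or_lt with rfl | hxy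
  · simp
  have hslope := hfc.slope_le_of_hasDerivWithinAt_Ioi hx hy hxy hf'
  rw [slope_def_field, div_le_iff₀ (sub_pos.2 hxy)] at hslope
  linarith

end ConvexOn

lemma integral_exp_div_sub_div_le {c : ℝ} (hc : 0 < c) :
    ∫ v in (0:ℝ)..1, exp (v / c - 1 / c) ≤ c := by
  rw [integral_comp_div_sub exp hc.ne', integral_exp, smul_eq_mul]
  simp only [zero_div, sub_self, zero_sub, exp_zero]
  nlinarith [exp_pos (-(1 / c))]

lemma integral_exp_neg_comp_mul_le {ψ : ℝ → ℝ} {a c : ℝ} (hc : 0 < c)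
    (h : ∀ v ∈ Ioc (0:ℝ) 1, ψ a + (1 - v) / c ≤ ψ (v * a)) :
    ∫ v in (0:ℝ)..1, exp (-ψ (v * a)) ≤ c * exp (-ψ a) := by
  have hle : ∀ v ∈ Ioc (0:ℝ) 1, exp (-ψ (v * a)) ≤ exp (-ψ a) * exp (v / c - 1 / c) := by
    intro v hv
    rw [← exp_add, exp_le_exp]
    have hsplit : (1 - v) / c = 1 / c - v / c := sub_div _ _ _
    linarith [h v hv]
  have hint : IntervalIntegrable (fun v ↦ exp (-ψ a) * exp (v / c - 1 / c)) volume 0 1 :=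
    Continuous.intervalIntegrable (by fun_prop) 0 1
  calc ∫ v in (0:ℝ)..1, exp (-ψ (v * a))
      ≤ ∫ v in (0:ℝ)..1, exp (-ψ a) * exp (v / c - 1 / c) := by
        rw [integral_of_le zero_le_one, integral_of_le zero_le_one]
        exact integral_mono_of_nonneg (ae_of_all _ fun v ↦ (exp_pos _).le)
          hint.1 ((ae_restrict_iff' measurableSet_Ioc).2 (ae_of_all _ hle))
    _ = exp (-ψ a) * ∫ v in (0:ℝ)..1, exp (v / c - 1 / c) := integral_const_mul _ _
    _ ≤ exp (-ψ a) * c := by gcongr; exact integral_exp_div_sub_div_le hc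
    _ = c * exp (-ψ a) := mul_comm _ _

lemma mul_rpow_neg_one_sub {a : ℝ} (ha : 0 < a) (r : ℝ) :
    a * a ^ (-1 - r) = (a ^ r)⁻¹ := by
  rw [show -1 - r = -r - 1 by ring, rpow_sub_one ha.ne', rpow_neg ha.le,
    mul_div_cancel₀ _ ha.ne']

theorem stmt15_general (β K₂ : ℝ) (hK₂ : 1 ≤ K₂)
    (ψ ψ' : ℝ → ℝ)
    (hconv : ConvexOn ℝ (Set.Ioo (0:ℝ) 1) ψ)
    (hderiv : ∀ θ ∈ Set.Ioo (0:ℝ) 1, HasDerivWithinAt ψ (ψ' θ) (Set.Ici θ) θ)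
    (hbound : ∀ θ ∈ Set.Ioo (0:ℝ) (1 / K₂), ψ' θ ≤ -(1 / K₂) * θ ^ (-1 - 1 / β))
    (φ : ℝ → ℝ) (hφ : ∀ θ, φ θ = Real.exp (-ψ θ)) :
    ∀ a ∈ Set.Ioo (0:ℝ) (1 / K₂),
      (∫ v in (0:ℝ)..1, φ (v * a)) ≤ K₂ * a ^ (1 / β) * φ a := by
  rintro a ⟨ha0, haK⟩
  have hK₂0 : 0 < K₂ := one_pos.trans_le hK₂
  have ha1 : a < 1 := haK.trans_le ((div_le_one hK₂0).2 hK₂)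
  have hc : 0 < K₂ * a ^ (1 / β) := mul_pos hK₂0 (rpow_pos_of_pos ha0 _)
  simp only [hφ]
  refine integral_exp_neg_comp_mul_le hc fun v ⟨hv0, hv1⟩ ↦ ?_
  have hva : v * a ≤ a := mul_le_of_le_one_left ha0.le hv1
  have htangent := hconv.add_mul_sub_le_of_hasDerivWithinAt_Ioi
    ⟨mul_pos hv0 ha0, hva.trans_lt ha1⟩ (by rw [interior_Ioo]; exact ⟨ha0, ha1⟩) hva
    (hderiv a ⟨ha0, ha1⟩).Ioi_of_Ici
  have hslope : (K₂ * a ^ (1 / β))⁻¹ ≤ -ψ' a * a := by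
    rw [mul_inv, ← mul_rpow_neg_one_sub ha0]
    calc K₂⁻¹ * (a * a ^ (-1 - 1 / β)) = -(-(1 / K₂) * a ^ (-1 - 1 / β) * a) := by ring
      _ ≤ -(ψ' a * a) := neg_le_neg (mul_le_mul_of_nonneg_right (hbound a ⟨ha0, haK⟩) ha0.le)
      _ = -ψ' a * a := by ring
  have hgain := mul_le_mul_of_nonneg_right hslope (sub_nonneg.2 hv1)
  rw [div_eq_mul_inv, mul_comm (1 - v)]
  linarith [show ψ' a * (v * a - a) = -ψ' a * a * (1 - v) by ring]

theorem stmt15 (β K₂ : ℝ) (hβ : 0 < β) (hK₂ : 1 ≤ K₂)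
    (ψ ψ' : ℝ → ℝ)
    (hpos : ∀ θ ∈ Set.Ioo (0:ℝ) 1, 0 < ψ θ)
    (hconv : ConvexOn ℝ (Set.Ioo (0:ℝ) 1) ψ)
    (hderiv : ∀ θ ∈ Set.Ioo (0:ℝ) 1, HasDerivWithinAt ψ (ψ' θ) (Set.Ici θ) θ)
    (hbound : ∀ θ ∈ Set.Ioo (0:ℝ) (1 / K₂), ψ' θ ≤ -(1 / K₂) * θ ^ (-1 - 1 / β))
    (φ : ℝ → ℝ) (hφ : ∀ θ, φ θ = Real.exp (-ψ θ)) :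
    ∀ a ∈ Set.Ioo (0:ℝ) (1 / K₂),
      (∫ v in (0:ℝ)..1, φ (v * a)) ≤ K₂ * a ^ (1 / β) * φ a :=
  stmt15_general β K₂ hK₂ ψ ψ' hconv hderiv hbound φ hφ
end

section
/- Let (A_i)_{i∈J}, J ⊆ ℕ, be events on a probability space. Suppose there exist K ≥ 0 and ε > 0 such that for all i ∈ J, Σ_{j∈J, j<i} P(A_i ∩ A_j) ≤ P(A_i) (K + (1+ε) Σ_{j∈J, j<i} P(A_j)), and suppose Σ_{i∈J} P(A_i) ≥ (1 + 2K)/ε. Then P(∪_{i∈J} A_i) ≥ (1 + 2ε)^{−1}. -/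
/-!
Cauchy–Schwarz applied to `N = ∑ i ∈ s, 𝟙_{A i}`, which vanishes off `⋃ i ∈ s, A i`, gives
`(∑ i ∈ s, P(A i))² ≤ E[N²] · P(⋃ i ∈ s, A i)` for every finite `s`. For the prefixes
`s = J ∩ [0, n)` the hypothesis bounds `E[N²] = ∑ i ∈ s, ∑ j ∈ s, P(A i ∩ A j)` by
`(1 + 2K) S + (1 + ε) S²`, where `S = ∑ i ∈ s, P(A i)`, hence `S ≤ (1 + 2K + (1 + ε) S) · p` with
`p = P(⋃ i ∈ J, A i)`. If `p < (1 + 2ε)⁻¹`, this keeps every partial sum `S` below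
`(1 + 2K) p / (1 - (1 + ε) p) < (1 + 2K) / ε`.
-/

open MeasureTheory ENNReal Finset

theorem Finset.sum_sum_eq_sum_add_two_mul_sum_filter_lt {ι R : Type*} [LinearOrder ι] [Semiring R]
    (s : Finset ι) (f : ι → ι → R) (hf : ∀ i j, f i j = f j i) :
    ∑ i ∈ s, ∑ j ∈ s, f i j = ∑ i ∈ s, f i i + 2 * ∑ i ∈ s, ∑ j ∈ s with j < i, f i j := by
  have hswap : ∑ i ∈ s, ∑ j ∈ s with i < j, f i j = ∑ i ∈ s, ∑ j ∈ s with j < i, f i j := by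
    simp only [sum_filter]
    rw [sum_comm]
    simp only [hf]
  have hsplit : ∀ i ∈ s, ∑ j ∈ s, f i j
      = ∑ j ∈ s with j < i, f i j + f i i + ∑ j ∈ s with i < j, f i j := by
    intro i hi
    have hdiag : f i i = ∑ j ∈ s, if i = j then f i j else 0 := by rw [sum_ite_eq, if_pos hi]
    rw [sum_filter, sum_filter, hdiag, ← sum_add_distrib, ← sum_add_distrib]
    refine sum_congr rfl fun j _ => ?_
    rcases lt_trichotomy j i with h | rfl | h
    · simp [h, h.ne', h.not_gt]
    · simp
    · simp [h, h.ne, h.not_gt]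
  rw [sum_congr rfl hsplit, sum_add_distrib, sum_add_distrib, hswap, two_mul]
  abel

theorem sum_sum_le_of_sum_filter_lt_le {ι : Type*} [LinearOrder ι] (s : Finset ι)
    (a : ι → ℝ) (b : ι → ι → ℝ) (hb : ∀ i j, b i j = b j i) (hdiag : ∀ i, b i i = a i)
    (K c : ℝ) (hc : 0 ≤ c)
    (h : ∀ i ∈ s, ∑ j ∈ s with j < i, b i j ≤ a i * (K + c * ∑ j ∈ s with j < i, a j)) :
    ∑ i ∈ s, ∑ j ∈ s, b i j ≤ (1 + 2 * K) * ∑ i ∈ s, a i + c * (∑ i ∈ s, a i) ^ 2 := by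
  have hcross : 2 * ∑ i ∈ s, ∑ j ∈ s with j < i, a i * a j ≤ (∑ i ∈ s, a i) ^ 2 := by
    rw [sq, sum_mul_sum, sum_sum_eq_sum_add_two_mul_sum_filter_lt s _ fun i j => mul_comm _ _]
    have hsq_nonneg := sum_nonneg fun i (_ : i ∈ s) => mul_self_nonneg (a i)
    linarith
  have htriangle : ∑ i ∈ s, ∑ j ∈ s with j < i, b i j
      ≤ K * ∑ i ∈ s, a i + c * ∑ i ∈ s, ∑ j ∈ s with j < i, a i * a j := by
    calc ∑ i ∈ s, ∑ j ∈ s with j < i, b i j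
        ≤ ∑ i ∈ s, a i * (K + c * ∑ j ∈ s with j < i, a j) := sum_le_sum h
      _ = ∑ i ∈ s, (K * a i + c * ∑ j ∈ s with j < i, a i * a j) :=
          sum_congr rfl fun i _ => by rw [← mul_sum]; ring
      _ = _ := by rw [sum_add_distrib, ← mul_sum, ← mul_sum]
  rw [sum_sum_eq_sum_add_two_mul_sum_filter_lt s b hb]
  simp only [hdiag]
  nlinarith

theorem sq_lintegral_le_lintegral_sq_mul_measure {α : Type*} [MeasurableSpace α] (μ : Measure α)
    {f : α → ℝ≥0∞} (hf : AEMeasurable f μ) {U : Set α} (hU : MeasurableSet U)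
    (hfU : ∀ x ∉ U, f x = 0) :
    (∫⁻ x, f x ∂μ) ^ 2 ≤ (∫⁻ x, f x ^ 2 ∂μ) * μ U := by
  have holder : ∫⁻ x, f x ∂μ ≤ (∫⁻ x, f x ^ 2 ∂μ) ^ (1 / 2 : ℝ) * μ U ^ (1 / 2 : ℝ) := by
    convert ENNReal.lintegral_mul_le_Lp_mul_Lq μ Real.HolderConjugate.two_two hf
      (aemeasurable_one.indicator hU) using 3 with x
    · by_cases hx : x ∈ U <;> simp [hx, hfU]
    · simp
    · rw [← lintegral_indicator_one hU]
      congr 1 with x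
      by_cases hx : x ∈ U <;> simp [hx]
  calc (∫⁻ x, f x ∂μ) ^ 2
      ≤ ((∫⁻ x, f x ^ 2 ∂μ) ^ (1 / 2 : ℝ) * μ U ^ (1 / 2 : ℝ)) ^ 2 := by gcongr
    _ = (∫⁻ x, f x ^ 2 ∂μ) * μ U := by
      rw [mul_pow, ← rpow_natCast, ← rpow_natCast, ← rpow_mul, ← rpow_mul]
      norm_num

theorem sq_sum_measure_le_sum_sum_measure_inter_mul_measure_biUnion {Ω ι : Type*}
    [MeasurableSpace Ω] (μ : Measure Ω) {A : ι → Set Ω} (s : Finset ι)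
    (hA : ∀ i ∈ s, MeasurableSet (A i)) :
    (∑ i ∈ s, μ (A i)) ^ 2 ≤ (∑ i ∈ s, ∑ j ∈ s, μ (A i ∩ A j)) * μ (⋃ i ∈ s, A i) := by
  have hmeas : ∀ i ∈ s, Measurable ((A i).indicator (1 : Ω → ℝ≥0∞)) :=
    fun i hi => measurable_one.indicator (hA i hi)
  have hN : ∫⁻ x, ∑ i ∈ s, (A i).indicator 1 x ∂μ = ∑ i ∈ s, μ (A i) := by
    rw [lintegral_finsetSum _ hmeas]
    exact sum_congr rfl fun i hi => lintegral_indicator_one (hA i hi)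
  have hN2 : ∫⁻ x, (∑ i ∈ s, (A i).indicator 1 x) ^ 2 ∂μ
      = ∑ i ∈ s, ∑ j ∈ s, μ (A i ∩ A j) := by
    simp only [sq, sum_mul_sum, ← Pi.mul_apply _ _ (_ : Ω), ← Set.inter_indicator_one]
    rw [lintegral_finsetSum _ fun i hi => s.measurable_fun_sum fun j hj =>
      measurable_one.indicator ((hA i hi).inter (hA j hj))]
    refine sum_congr rfl fun i hi => ?_
    rw [lintegral_finsetSum _ fun j hj => measurable_one.indicator ((hA i hi).inter (hA j hj))]
    exact sum_congr rfl fun j hj => lintegral_indicator_one ((hA i hi).inter (hA j hj))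
  have hNU : ∀ x ∉ ⋃ i ∈ s, A i, ∑ i ∈ s, (A i).indicator (1 : Ω → ℝ≥0∞) x = 0 := by
    intro x hx
    simp only [Set.mem_iUnion, not_exists] at hx
    exact sum_eq_zero fun i hi => Set.indicator_of_notMem (hx i hi) _
  rw [← hN, ← hN2]
  exact sq_lintegral_le_lintegral_sq_mul_measure μ
    (s.measurable_fun_sum hmeas).aemeasurable (s.measurableSet_biUnion hA) hNU

theorem sq_sum_toReal_measure_le_sum_sum_toReal_measure_inter_mul {Ω ι : Type*}
    [MeasurableSpace Ω] (μ : Measure Ω) [IsFiniteMeasure μ] {A : ι → Set Ω} (s : Finset ι)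
    (hA : ∀ i ∈ s, MeasurableSet (A i)) :
    (∑ i ∈ s, (μ (A i)).toReal) ^ 2
      ≤ (∑ i ∈ s, ∑ j ∈ s, (μ (A i ∩ A j)).toReal) * (μ (⋃ i ∈ s, A i)).toReal := by
  have h := toReal_mono
    (mul_ne_top (sum_ne_top.2 fun _ _ => sum_ne_top.2 fun _ _ => measure_ne_top μ _)
      (measure_ne_top μ _))
    (sq_sum_measure_le_sum_sum_measure_inter_mul_measure_biUnion μ s hA)
  simpa only [toReal_pow, toReal_mul, toReal_sum (fun _ _ => measure_ne_top μ _),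
    toReal_sum (fun _ _ => sum_ne_top.2 fun _ _ => measure_ne_top μ _)] using h

theorem ENNReal.tsum_subtype_le_of_sum_filter_range_le {J : Set ℕ} [DecidablePred (· ∈ J)]
    {f : ℕ → ℝ≥0∞} {c : ℝ≥0∞} (h : ∀ n, ∑ i ∈ (range n).filter (· ∈ J), f i ≤ c) :
    ∑' i : J, f i ≤ c := by
  rw [_root_.tsum_subtype]
  refine ENNReal.tsum_le_of_sum_range_le fun n => ?_
  simpa only [Set.indicator_apply, sum_filter] using h n

theorem sum_toReal_measure_le_mul_measure_biUnion {Ω : Type*} [MeasurableSpace Ω]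
    (μ : Measure Ω) [IsFiniteMeasure μ] (J : Set ℕ) [DecidablePred (· ∈ J)] (A : ℕ → Set Ω)
    (hA : ∀ i, MeasurableSet (A i)) (K c : ℝ) (hK : 0 ≤ K) (hc : 0 ≤ c)
    (hpair : ∀ i ∈ J,
      ∑ j ∈ (range i).filter (· ∈ J), (μ (A i ∩ A j)).toReal ≤
        (μ (A i)).toReal * (K + c * ∑ j ∈ (range i).filter (· ∈ J), (μ (A j)).toReal))
    (n : ℕ) :
    ∑ i ∈ (range n).filter (· ∈ J), (μ (A i)).toReal
      ≤ (1 + 2 * K + c * ∑ i ∈ (range n).filter (· ∈ J), (μ (A i)).toReal)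
        * (μ (⋃ i ∈ J, A i)).toReal := by
  set s := (range n).filter (· ∈ J)
  set S := ∑ i ∈ s, (μ (A i)).toReal
  set P := (μ (⋃ i ∈ J, A i)).toReal
  have hprefix : ∀ i ∈ s, s.filter (· < i) = (range i).filter (· ∈ J) := by
    intro i hi
    ext j
    simp only [s, mem_filter, mem_range] at hi ⊢
    constructor
    · rintro ⟨⟨-, hj⟩, hji⟩
      exact ⟨hji, hj⟩
    · rintro ⟨hji, hj⟩
      exact ⟨⟨hji.trans hi.1, hj⟩, hji⟩
  have hdouble := sum_sum_le_of_sum_filter_lt_le s (fun i => (μ (A i)).toReal)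
    (fun i j => (μ (A i ∩ A j)).toReal) (fun i j => by rw [Set.inter_comm])
    (fun i => by rw [Set.inter_self]) K c hc
    (fun i hi => by rw [hprefix i hi]; exact hpair i (mem_filter.1 hi).2)
  have hsub : (μ (⋃ i ∈ s, A i)).toReal ≤ P :=
    toReal_mono (measure_ne_top μ _) (measure_mono <| Set.biUnion_mono
      (fun i hi => (mem_filter.1 hi).2) fun _ _ => le_rfl)
  have hsq : S ^ 2 ≤ ((1 + 2 * K) * S + c * S ^ 2) * P :=
    (sq_sum_toReal_measure_le_sum_sum_toReal_measure_inter_mul μ s fun i _ => hA i).trans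
      (mul_le_mul hdouble hsub toReal_nonneg (by positivity))
  have hS : 0 ≤ S := sum_nonneg fun i _ => toReal_nonneg
  rcases hS.eq_or_lt with hS | hS
  · rw [← hS]
    positivity
  · nlinarith

theorem stmt16 {Ω : Type*} [MeasurableSpace Ω] (μ : Measure Ω) [IsProbabilityMeasure μ]
    (J : Set ℕ) [DecidablePred (· ∈ J)] (A : ℕ → Set Ω)
    (hA : ∀ i, MeasurableSet (A i))
    (K ε : ℝ) (hK : 0 ≤ K) (hε : 0 < ε)
    (hpair : ∀ i ∈ J,
      ∑ j ∈ (Finset.range i).filter (· ∈ J), (μ (A i ∩ A j)).toReal ≤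
        (μ (A i)).toReal *
          (K + (1 + ε) * ∑ j ∈ (Finset.range i).filter (· ∈ J), (μ (A j)).toReal))
    (hsum : ENNReal.ofReal ((1 + 2 * K) / ε) ≤ ∑' i : J, μ (A i)) :
    ENNReal.ofReal ((1 + 2 * ε)⁻¹) ≤ μ (⋃ i ∈ J, A i) := by
  set P := (μ (⋃ i ∈ J, A i)).toReal
  have hpartial :=
    sum_toReal_measure_le_mul_measure_biUnion μ J A hA K (1 + ε) hK (by linarith) hpair
  rw [ofReal_le_iff_le_toReal (measure_ne_top μ _)]
  by_contra! hP
  rw [← one_div, lt_div_iff₀ (by linarith)] at hP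
  have hden : 0 < 1 - (1 + ε) * P := by nlinarith [(toReal_nonneg : 0 ≤ P)]
  have hbound : ∑' i : J, μ (A i) ≤ ENNReal.ofReal ((1 + 2 * K) * P / (1 - (1 + ε) * P)) := by
    refine tsum_subtype_le_of_sum_filter_range_le (f := fun i => μ (A i)) fun n => ?_
    rw [le_ofReal_iff_toReal_le (sum_ne_top.2 fun _ _ => measure_ne_top μ _) (by positivity),
      toReal_sum fun _ _ => measure_ne_top μ _, le_div_iff₀ hden]
    nlinarith [hpartial n]
  have h := (ofReal_le_ofReal_iff (by positivity)).1 (hsum.trans hbound)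
  rw [div_le_div_iff₀ hε hden] at h
  nlinarith
end

section
/- Let β ∈ (0, 1), γ > 0, H = β − γ > 0, and let ξ : (0, e^{−e}] → (0, ∞) be nondecreasing continuous with lim_{t→0+} ξ(t)/t^H = 0. Define sequences by t_1 = e^{−e} and, given t_n > 0, u_{n+1} = inf{u < t_n : u + t_n^{γ/β} ξ(u)^{1/β} ≥ t_n}, v_{n+1} = inf{u < t_n : ξ(u)(1 + L (ξ(u)/u^H)^{1/β}) ≥ ξ(t_n)} for a fixed constant L > 0, and t_{n+1} = max{u_{n+1}, v_{n+1}} (assuming these infima are positive so the recursion is well defined). Then (t_n) is strictly decreasing and lim_{n→∞} t_n = 0. -/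
open Real Filter Topology Set

/-!
Both infima lie below `t n`, so `t` decreases to some `a ≥ 0`; suppose `a > 0`. Every point left
of `t (n + 1)` violates the defining inequality of the infimum realizing the maximum, so by
left-continuity of `ξ` the reverse inequality holds at `t (n + 1)` itself. Since `a ≤ t (n + 1)`
and `ξ` is monotone, this forces either `t n - t (n + 1) ≥ a ^ (γ / β) * ξ a ^ (1 / β)` or
`ξ (t n) - ξ (t (n + 1)) ≥ ξ a * L * (ξ a / t 1 ^ H) ^ (1 / β)`, two positive constants. But both
differences tend to `0`, as `t` and `ξ ∘ t` converge.
-/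

lemma Real.nonempty_and_bddBelow_of_sInf_ne_zero {S : Set ℝ} (h : sInf S ≠ 0) :
    S.Nonempty ∧ BddBelow S := by
  refine ⟨Set.nonempty_iff_ne_empty.2 ?_, ?_⟩
  · rintro rfl
    exact h Real.sInf_empty
  · by_contra hS
    exact h (Real.sInf_of_not_bddBelow hS)

lemma Real.sInf_lt_of_pos {S : Set ℝ} {b : ℝ} (h : 0 < sInf S) (hb : ∀ x ∈ S, x < b) :
    sInf S < b := by
  obtain ⟨⟨x, hx⟩, hbdd⟩ := Real.nonempty_and_bddBelow_of_sInf_ne_zero h.ne'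
  exact csInf_lt_of_lt hbdd hx (hb x hx)

lemma le_of_eq_sInf_setOf_lt_le {g : ℝ → ℝ} {b c w : ℝ}
    (hw : w = sInf {x | x < b ∧ c ≤ g x}) (hw0 : 0 < w)
    (hg : ContinuousWithinAt g (Iio w) w) : g w ≤ c := by
  subst hw
  have hbdd := (Real.nonempty_and_bddBelow_of_sInf_ne_zero hw0.ne').2
  have hwb := Real.sInf_lt_of_pos hw0 fun x hx => hx.1
  refine le_of_tendsto hg ?_
  filter_upwards [self_mem_nhdsWithin] with x (hx : x < _)
  by_contra! hcx
  exact notMem_of_lt_csInf hx hbdd ⟨hx.trans hwb, hcx.le⟩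

lemma ContinuousOn.continuousWithinAt_Iio_of_mem_Ioc {α β : Type*} [TopologicalSpace α]
    [LinearOrder α] [OrderTopology α] [TopologicalSpace β] {f : α → β} {a b w : α}
    (hf : ContinuousOn f (Ioc a b)) (hw : w ∈ Ioc a b) : ContinuousWithinAt f (Iio w) w :=
  (hf.continuousWithinAt hw).mono_of_mem_nhdsWithin <|
    mem_of_superset (Ioo_mem_nhdsLT hw.1) (Ioo_subset_Ioc_self.trans (Ioc_subset_Ioc_right hw.2))

lemma sub_le_of_eq_sInf_le_add {ξ : ℝ → ℝ} {p q s w a m : ℝ} (hp : 0 ≤ p) (hq : 0 ≤ q)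
    (hw : w = sInf {x | x < s ∧ s ≤ x + s ^ p * ξ x ^ q}) (hw0 : 0 < w)
    (hξ : ContinuousWithinAt ξ (Iio w) w) (ha : 0 ≤ a) (haw : a ≤ w) (hm : 0 ≤ m)
    (hmw : m ≤ ξ w) : a ^ p * m ^ q ≤ s - w := by
  have hws : w < s := hw ▸ Real.sInf_lt_of_pos (hw ▸ hw0) fun x hx => hx.1
  have hlim : w + s ^ p * ξ w ^ q ≤ s :=
    le_of_eq_sInf_setOf_lt_le (g := fun x => x + s ^ p * ξ x ^ q) hw hw0 <|
      continuousWithinAt_id.add (continuousWithinAt_const.mul (hξ.rpow_const (.inr hq)))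
  have : a ^ p * m ^ q ≤ s ^ p * ξ w ^ q := by
    have hs : 0 ≤ s ^ p := rpow_nonneg (hw0.trans hws).le p
    gcongr
    linarith
  linarith

lemma sub_le_of_eq_sInf_le_mul {ξ : ℝ → ℝ} {L H q s w T m : ℝ} (hL : 0 ≤ L) (hH : 0 ≤ H)
    (hq : 0 ≤ q) (hw : w = sInf {x | x < s ∧ ξ s ≤ ξ x * (1 + L * (ξ x / x ^ H) ^ q)})
    (hw0 : 0 < w) (hwT : w ≤ T) (hξ : ContinuousWithinAt ξ (Iio w) w) (hm : 0 ≤ m)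
    (hmw : m ≤ ξ w) : m * (L * (m / T ^ H) ^ q) ≤ ξ s - ξ w := by
  have hwH : 0 < w ^ H := rpow_pos_of_pos hw0 H
  have hlim : ξ w * (1 + L * (ξ w / w ^ H) ^ q) ≤ ξ s := by
    refine le_of_eq_sInf_setOf_lt_le (g := fun x => ξ x * (1 + L * (ξ x / x ^ H) ^ q)) hw hw0 <|
      hξ.mul <| continuousWithinAt_const.add <| continuousWithinAt_const.mul <|
        (hξ.div (g := fun x => x ^ H) ?_ hwH.ne').rpow_const (.inr hq)
    exact (continuousAt_id.rpow_const (.inl hw0.ne')).continuousWithinAt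
  have : m * (L * (m / T ^ H) ^ q) ≤ ξ w * (L * (ξ w / w ^ H) ^ q) := by
    have hT : 0 < T ^ H := rpow_pos_of_pos (hw0.trans_le hwT) H
    have hξw : 0 ≤ ξ w := hm.trans hmw
    gcongr
  linarith

lemma exists_tendsto_of_succ_le_of_nonneg {t : ℕ → ℝ} (hanti : ∀ n, 1 ≤ n → t (n + 1) ≤ t n)
    (hnonneg : ∀ n, 1 ≤ n → 0 ≤ t n) :
    ∃ a, 0 ≤ a ∧ Tendsto t atTop (𝓝 a) ∧ ∀ n, 1 ≤ n → a ≤ t n := by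
  have hanti' : Antitone fun n => t (n + 1) :=
    antitone_nat_of_succ_le fun n => hanti (n + 1) n.succ_pos
  have hbdd : BddBelow (range fun n => t (n + 1)) :=
    ⟨0, by rintro _ ⟨n, rfl⟩; exact hnonneg (n + 1) n.succ_pos⟩
  refine ⟨⨅ n, t (n + 1), le_ciInf fun n => hnonneg (n + 1) n.succ_pos,
    (tendsto_add_atTop_iff_nat 1).1 (tendsto_atTop_ciInf hanti' hbdd), fun n hn => ?_⟩
  obtain ⟨k, rfl⟩ := Nat.exists_eq_add_of_le' hn
  exact ciInf_le hbdd k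

lemma Filter.Tendsto.eventually_sub_succ_lt {f : ℕ → ℝ} {x c : ℝ} (hf : Tendsto f atTop (𝓝 x))
    (hc : 0 < c) : ∀ᶠ n in atTop, f n - f (n + 1) < c := by
  have : Tendsto (fun n => f n - f (n + 1)) atTop (𝓝 0) := by
    simpa using hf.sub (hf.comp (tendsto_add_atTop_nat 1))
  exact this.eventually_lt_const hc

lemma sub_le_or_sub_le_of_eq_max_sInf {ξ : ℝ → ℝ} {p q L H s w T a m : ℝ} (hp : 0 ≤ p)
    (hq : 0 ≤ q) (hL : 0 ≤ L) (hH : 0 ≤ H)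
    (hw : w = max (sInf {x | x < s ∧ s ≤ x + s ^ p * ξ x ^ q})
      (sInf {x | x < s ∧ ξ s ≤ ξ x * (1 + L * (ξ x / x ^ H) ^ q)}))
    (hw0 : 0 < w) (hwT : w ≤ T) (hξ : ContinuousWithinAt ξ (Iio w) w) (ha : 0 ≤ a)
    (haw : a ≤ w) (hm : 0 ≤ m) (hmw : m ≤ ξ w) :
    a ^ p * m ^ q ≤ s - w ∨ m * (L * (m / T ^ H) ^ q) ≤ ξ s - ξ w := by
  rcases max_choice (sInf {x | x < s ∧ s ≤ x + s ^ p * ξ x ^ q})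
    (sInf {x | x < s ∧ ξ s ≤ ξ x * (1 + L * (ξ x / x ^ H) ^ q)}) with h | h <;> rw [h] at hw
  · exact .inl (sub_le_of_eq_sInf_le_add hp hq hw hw0 hξ ha haw hm hmw)
  · exact .inr (sub_le_of_eq_sInf_le_mul hL hH hq hw hw0 hwT hξ hm hmw)

theorem stmt19_general (β γ H L : ℝ)
    (hβ : β ∈ Set.Ioo (0:ℝ) 1) (hγ : 0 < γ) (hHpos : 0 < H) (hL : 0 < L)
    (ξ : ℝ → ℝ)
    (hξpos : ∀ s ∈ Set.Ioc (0:ℝ) (exp (-exp 1)), 0 < ξ s)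
    (hξmono : MonotoneOn ξ (Set.Ioc (0:ℝ) (exp (-exp 1))))
    (hξcont : ContinuousOn ξ (Set.Ioc (0:ℝ) (exp (-exp 1))))
    (t u v : ℕ → ℝ)
    (ht1 : t 1 = exp (-exp 1))
    (hu : ∀ n : ℕ, 1 ≤ n →
      u (n + 1) = sInf {x : ℝ | x < t n ∧ t n ≤ x + (t n) ^ (γ / β) * (ξ x) ^ (1 / β)})
    (hv : ∀ n : ℕ, 1 ≤ n →
      v (n + 1) = sInf {x : ℝ | x < t n ∧ ξ (t n) ≤ ξ x * (1 + L * (ξ x / x ^ H) ^ (1 / β))})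
    (ht : ∀ n : ℕ, 1 ≤ n → t (n + 1) = max (u (n + 1)) (v (n + 1)))
    (hupos : ∀ n : ℕ, 1 ≤ n → 0 < u (n + 1))
    (hvpos : ∀ n : ℕ, 1 ≤ n → 0 < v (n + 1)) :
    (∀ n : ℕ, 1 ≤ n → t (n + 1) < t n) ∧ Tendsto t atTop (nhds 0) := by
  set T := exp (-exp 1)
  have hdec (n : ℕ) (hn : 1 ≤ n) : t (n + 1) < t n := by
    rw [ht n hn, hu n hn, hv n hn]
    exact max_lt (Real.sInf_lt_of_pos (hu n hn ▸ hupos n hn) fun x hx => hx.1)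
      (Real.sInf_lt_of_pos (hv n hn ▸ hvpos n hn) fun x hx => hx.1)
  have hmem : ∀ n, 1 ≤ n → t n ∈ Ioc 0 T := Nat.le_induction
    (by rw [ht1]; exact ⟨exp_pos _, le_rfl⟩)
    fun n hn ih => ⟨(hvpos n hn).trans_le (ht n hn ▸ le_max_right _ _), (hdec n hn).le.trans ih.2⟩
  refine ⟨hdec, ?_⟩
  obtain ⟨a, ha0, hta, hat⟩ := exists_tendsto_of_succ_le_of_nonneg (fun n hn => (hdec n hn).le)
    fun n hn => (hmem n hn).1.le
  rcases ha0.eq_or_lt with rfl | ha0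
  · exact hta
  have ha : a ∈ Ioc 0 T := ⟨ha0, ht1 ▸ hat 1 le_rfl⟩
  have hξt : Tendsto (fun n => ξ (t n)) atTop (𝓝 (ξ a)) :=
    (hξcont a ha).tendsto.comp (tendsto_nhdsWithin_iff.2 ⟨hta, eventually_atTop.2 ⟨1, hmem⟩⟩)
  have hξa := hξpos a ha
  have hβ0 := hβ.1
  have hstep (n : ℕ) (hn : 1 ≤ n) : a ^ (γ / β) * ξ a ^ (1 / β) ≤ t n - t (n + 1) ∨
      ξ a * (L * (ξ a / T ^ H) ^ (1 / β)) ≤ ξ (t n) - ξ (t (n + 1)) := by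
    have hw := hmem (n + 1) (by omega)
    exact sub_le_or_sub_le_of_eq_max_sInf (by positivity) (by positivity) hL.le hHpos.le
      (by rw [ht n hn, hu n hn, hv n hn]) hw.1 hw.2 (hξcont.continuousWithinAt_Iio_of_mem_Ioc hw)
      ha0.le (hat _ (by omega)) hξa.le (hξmono ha hw (hat _ (by omega)))
  obtain ⟨n, hn, hgap, hgap'⟩ := ((eventually_ge_atTop 1).and <|
    (hta.eventually_sub_succ_lt (by positivity : 0 < a ^ (γ / β) * ξ a ^ (1 / β))).and
      (hξt.eventually_sub_succ_lt (by positivity : 0 < ξ a * (L * (ξ a / T ^ H) ^ (1 / β))))).exists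
  rcases hstep n hn with h | h <;> linarith

theorem stmt19 (β γ H L : ℝ)
    (hβ : β ∈ Set.Ioo (0:ℝ) 1) (hγ : 0 < γ) (hH : H = β - γ) (hHpos : 0 < H) (hL : 0 < L)
    (ξ : ℝ → ℝ)
    (hξpos : ∀ s ∈ Set.Ioc (0:ℝ) (exp (-exp 1)), 0 < ξ s)
    (hξmono : MonotoneOn ξ (Set.Ioc (0:ℝ) (exp (-exp 1))))
    (hξcont : ContinuousOn ξ (Set.Ioc (0:ℝ) (exp (-exp 1))))
    (hlim : Tendsto (fun s : ℝ => ξ s / s ^ H) (nhdsWithin 0 (Set.Ioi 0)) (nhds 0))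
    (t u v : ℕ → ℝ)
    (ht1 : t 1 = exp (-exp 1))
    (hu : ∀ n : ℕ, 1 ≤ n →
      u (n + 1) = sInf {x : ℝ | x < t n ∧ t n ≤ x + (t n) ^ (γ / β) * (ξ x) ^ (1 / β)})
    (hv : ∀ n : ℕ, 1 ≤ n →
      v (n + 1) = sInf {x : ℝ | x < t n ∧ ξ (t n) ≤ ξ x * (1 + L * (ξ x / x ^ H) ^ (1 / β))})
    (ht : ∀ n : ℕ, 1 ≤ n → t (n + 1) = max (u (n + 1)) (v (n + 1)))
    (hupos : ∀ n : ℕ, 1 ≤ n → 0 < u (n + 1))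
    (hvpos : ∀ n : ℕ, 1 ≤ n → 0 < v (n + 1)) :
    (∀ n : ℕ, 1 ≤ n → t (n + 1) < t n) ∧ Tendsto t atTop (nhds 0) :=
  stmt19_general β γ H L hβ hγ hHpos hL ξ hξpos hξmono hξcont t u v ht1 hu hv ht hupos hvpos
end
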